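/- arXiv:1808.00663 — 2 statements merged into one kernel-verified Lean document; each statement's English description precedes it below -/
import Mathlib

section
/- Let U₁, U₂ be two solutions of the Riccati equation U' + U² + K(t) = 0 along the same curve (same continuous function K: ℝ → ℝ), defined for all t ≥ 0, with U₁(0) ≥ U₂(0) and U₂(t) ≥ 0 for all t ≥ 0. Then U₁(t) ≥ U₂(t) for all t ≥ 0, and moreover 0 ≤ U₁(t) - U₂(t) ≤ (U₁(0) - U₂(0))·exp(-2∫_0^t U₂(s) ds). -/
/-!
The difference `W = U₁ - U₂` of two Riccati solutions solves the linear equation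
`W' = -(U₁ + U₂) W`, so `W t = W 0 * exp (-∫₀ᵗ (U₁ + U₂))`. Hence `W` keeps the sign of `W 0 ≥ 0`,
and then `U₁ + U₂ ≥ 2 U₂` gives the exponential bound.
-/

open MeasureTheory Real Set

theorem eq_mul_exp_neg_integral_of_hasDerivAt {a W : ℝ → ℝ} (ha : ContinuousOn a (Ici 0))
    (hW : ∀ t, 0 ≤ t → HasDerivAt W (-(a t * W t)) t) {t : ℝ} (ht : 0 ≤ t) :
    W t = W 0 * exp (-∫ s in (0:ℝ)..t, a s) := by
  -- `a` is extended to a continuous function on `ℝ` so that its primitive is differentiable at `0`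
  set ā : ℝ → ℝ := fun s => a (max s 0)
  have hā : Continuous ā :=
    ha.comp_continuous (continuous_id.max continuous_const) fun s => le_max_right s 0
  have hāa : EqOn ā a (Ici 0) := fun s hs => by simp only [ā, max_eq_left (mem_Ici.mp hs)]
  set F : ℝ → ℝ := fun x => W x * exp (∫ s in (0:ℝ)..x, ā s)
  have hF : ∀ x ∈ Icc 0 t, HasDerivAt F 0 x := fun x hx => by
    have h := (hW x hx.1).mul ((hā.integral_hasStrictDerivAt 0 x).hasDerivAt.exp)
    refine h.congr_deriv ?_
    rw [hāa hx.1]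
    ring
  have hFt : F t = F 0 :=
    constant_of_has_deriv_right_zero (fun x hx => (hF x hx).continuousAt.continuousWithinAt)
      (fun x hx => (hF x (Ico_subset_Icc_self hx)).hasDerivWithinAt) t ⟨ht, le_rfl⟩
  have hint : ∫ s in (0:ℝ)..t, ā s = ∫ s in (0:ℝ)..t, a s :=
    intervalIntegral.integral_congr (hāa.mono (by simp [uIcc_of_le ht, Icc_subset_Ici_self]))
  simp only [F, intervalIntegral.integral_same, exp_zero, mul_one, hint] at hFt
  rw [← hFt, mul_assoc, ← exp_add, add_neg_cancel, exp_zero, mul_one]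

theorem riccati_sub_eq_mul_exp {K U₁ U₂ : ℝ → ℝ}
    (hU₁ : ∀ t, 0 ≤ t → HasDerivAt U₁ (-(U₁ t) ^ 2 - K t) t)
    (hU₂ : ∀ t, 0 ≤ t → HasDerivAt U₂ (-(U₂ t) ^ 2 - K t) t) {t : ℝ} (ht : 0 ≤ t) :
    U₁ t - U₂ t = (U₁ 0 - U₂ 0) * exp (-∫ s in (0:ℝ)..t, (U₁ s + U₂ s)) := by
  refine eq_mul_exp_neg_integral_of_hasDerivAt (W := fun s => U₁ s - U₂ s) ?_ ?_ ht
  · exact fun x hx => ((hU₁ x hx).continuousAt.add (hU₂ x hx).continuousAt).continuousWithinAt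
  · exact fun x hx => ((hU₁ x hx).sub (hU₂ x hx)).congr_deriv (by ring)

theorem riccati_solutions_comparison_general (K U₁ U₂ : ℝ → ℝ)
    (hU₁ : ∀ t, 0 ≤ t → HasDerivAt U₁ (-(U₁ t) ^ 2 - K t) t)
    (hU₂ : ∀ t, 0 ≤ t → HasDerivAt U₂ (-(U₂ t) ^ 2 - K t) t)
    (h0 : U₂ 0 ≤ U₁ 0) :
    ∀ t, 0 ≤ t → U₂ t ≤ U₁ t ∧
      U₁ t - U₂ t ≤ (U₁ 0 - U₂ 0) * Real.exp (-2 * ∫ s in (0:ℝ)..t, U₂ s) := by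
  have hle : ∀ t, 0 ≤ t → U₂ t ≤ U₁ t := fun t ht => sub_nonneg.mp <|
    riccati_sub_eq_mul_exp hU₁ hU₂ ht ▸ mul_nonneg (sub_nonneg.mpr h0) (exp_pos _).le
  intro t ht
  refine ⟨hle t ht, ?_⟩
  have hcU₁ : ContinuousOn U₁ (uIcc 0 t) := fun x hx =>
    (hU₁ x (uIcc_of_le ht ▸ hx).1).continuousAt.continuousWithinAt
  have hcU₂ : ContinuousOn U₂ (uIcc 0 t) := fun x hx =>
    (hU₂ x (uIcc_of_le ht ▸ hx).1).continuousAt.continuousWithinAt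
  have hmono : ∫ s in (0:ℝ)..t, 2 * U₂ s ≤ ∫ s in (0:ℝ)..t, (U₁ s + U₂ s) :=
    intervalIntegral.integral_mono_on ht ((hcU₂.const_smul (2:ℝ)).intervalIntegrable)
      ((hcU₁.add hcU₂).intervalIntegrable) fun s hs => by linarith [hle s hs.1]
  rw [intervalIntegral.integral_const_mul] at hmono
  rw [riccati_sub_eq_mul_exp hU₁ hU₂ ht]
  exact mul_le_mul_of_nonneg_left (exp_le_exp.mpr (by linarith)) (sub_nonneg.mpr h0)

theorem riccati_solutions_comparison (K U₁ U₂ : ℝ → ℝ) (hK : Continuous K)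
    (hU₁ : ∀ t, 0 ≤ t → HasDerivAt U₁ (-(U₁ t) ^ 2 - K t) t)
    (hU₂ : ∀ t, 0 ≤ t → HasDerivAt U₂ (-(U₂ t) ^ 2 - K t) t)
    (hU₂nonneg : ∀ t, 0 ≤ t → 0 ≤ U₂ t)
    (h0 : U₂ 0 ≤ U₁ 0) :
    ∀ t, 0 ≤ t → U₂ t ≤ U₁ t ∧
      U₁ t - U₂ t ≤ (U₁ 0 - U₂ 0) * Real.exp (-2 * ∫ s in (0:ℝ)..t, U₂ s) :=
  riccati_solutions_comparison_general K U₁ U₂ hU₁ hU₂ h0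
end

section
/- Let K₁, K₂: [0,∞) → ℝ be continuous and let U₁, U₂ solve the Riccati equations Uᵢ' + Uᵢ² + Kᵢ = 0 with U₁(t) ≥ U₂(t) ≥ λ(t) ≥ 0 on an interval [s₀, τ] where U₁(s₀) = U₂(s₀). Then U₁(τ) - U₂(τ) ≤ ∫_{s₀}^{τ} exp(-2∫_s^{τ} λ(a) da)·|K₁(s) - K₂(s)| ds. -/
/-! The gap `W = U₁ - U₂ ≥ 0` satisfies `W' = -(U₁ + U₂) W - (K₁ - K₂) ≤ -2λ W + |K₁ - K₂|`,
since `U₁ + U₂ ≥ 2λ`. This linear differential inequality is integrated with the factor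
`exp (2 ∫ λ)`, starting from `W s₀ = 0`. -/

open MeasureTheory Real Set

theorem ContinuousOn.hasDerivAt_integral_of_mem_Ioo {c : ℝ → ℝ} {a b x : ℝ}
    (hc : ContinuousOn c (Icc a b)) (hx : x ∈ Ioo a b) :
    HasDerivAt (fun t => ∫ s in a..t, c s) (c x) x :=
  intervalIntegral.integral_hasDerivAt_right
    ((hc.mono (Icc_subset_Icc le_rfl hx.2.le)).intervalIntegrable_of_Icc hx.1.le)
    ((hc.mono Ioo_subset_Icc_self).stronglyMeasurableAtFilter isOpen_Ioo x hx)
    (hc.continuousAt (Icc_mem_nhds hx.1 hx.2))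

theorem le_exp_neg_integral_mul_add_integral_of_hasDerivAt_le {W W' c φ : ℝ → ℝ} {a b : ℝ}
    (hab : a ≤ b) (hW : ContinuousOn W (Icc a b)) (hW' : ∀ x ∈ Ioo a b, HasDerivAt W (W' x) x)
    (hc : ContinuousOn c (Icc a b)) (hφ : IntegrableOn φ (Icc a b))
    (hle : ∀ x ∈ Ioo a b, W' x ≤ -c x * W x + φ x) :
    W b ≤ exp (-∫ s in a..b, c s) * W a + ∫ s in a..b, exp (-∫ u in s..b, c u) * φ s := by
  set Λ : ℝ → ℝ := fun t => ∫ s in a..t, c s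
  have hΛcont : ContinuousOn Λ (Icc a b) := by
    have := intervalIntegral.continuousOn_primitive_interval (μ := volume)
      (by rw [uIcc_of_le hab]; exact hc.integrableOn_Icc : IntegrableOn c (uIcc a b))
    rwa [uIcc_of_le hab] at this
  -- `exp Λ` is the integrating factor: `(exp Λ * W)' = exp Λ * (W' + c W) ≤ exp Λ * φ`.
  have hmain : exp (Λ b) * W b - exp (Λ a) * W a ≤ ∫ s in a..b, exp (Λ s) * φ s := by
    refine intervalIntegral.sub_le_integral_of_hasDeriv_right_of_le hab
      ((continuous_exp.comp_continuousOn hΛcont).mul hW)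
      (fun x hx => (((hc.hasDerivAt_integral_of_mem_Ioo hx).exp).mul (hW' x hx)).hasDerivWithinAt)
      (hφ.continuousOn_mul (continuous_exp.comp_continuousOn hΛcont) isCompact_Icc)
      (fun x hx => ?_)
    have := mul_le_mul_of_nonneg_left (hle x hx) (exp_pos (Λ x)).le
    linarith
  have hΛa : Λ a = 0 := intervalIntegral.integral_same
  have htail : (∫ s in a..b, exp (-∫ u in s..b, c u) * φ s)
      = exp (-Λ b) * ∫ s in a..b, exp (Λ s) * φ s := by
    rw [← intervalIntegral.integral_const_mul]
    refine intervalIntegral.integral_congr fun s hs => ?_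
    rw [uIcc_of_le hab] at hs
    have hsplit : (∫ u in s..b, c u) = Λ b - Λ s :=
      (intervalIntegral.integral_interval_sub_left (hc.intervalIntegrable_of_Icc hab)
        ((hc.mono (Icc_subset_Icc le_rfl hs.2)).intervalIntegrable_of_Icc hs.1)).symm
    rw [hsplit, neg_sub, sub_eq_add_neg, exp_add]
    ring
  rw [hΛa, exp_zero, one_mul] at hmain
  rw [htail]
  calc W b = exp (-Λ b) * (exp (Λ b) * W b) := by rw [← mul_assoc, ← exp_add]; simp
    _ ≤ exp (-Λ b) * (W a + ∫ s in a..b, exp (Λ s) * φ s) := by gcongr; linarith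
    _ = exp (-Λ b) * W a + exp (-Λ b) * ∫ s in a..b, exp (Λ s) * φ s := mul_add _ _ _

theorem riccati_rhs_sub_le {u₁ u₂ k₁ k₂ l : ℝ} (hl : l ≤ u₂) (hu : u₂ ≤ u₁) :
    (-u₁ ^ 2 - k₁) - (-u₂ ^ 2 - k₂) ≤ -(2 * l) * (u₁ - u₂) + |k₁ - k₂| := by
  have hfactor : (-u₁ ^ 2 - k₁) - (-u₂ ^ 2 - k₂) = -(u₁ + u₂) * (u₁ - u₂) - (k₁ - k₂) := by ring
  have hsum : 2 * l * (u₁ - u₂) ≤ (u₁ + u₂) * (u₁ - u₂) :=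
    mul_le_mul_of_nonneg_right (by linarith) (sub_nonneg.2 hu)
  linarith [neg_abs_le (k₁ - k₂)]

theorem riccati_difference_estimate_general (K₁ K₂ U₁ U₂ l : ℝ → ℝ) (s₀ τ : ℝ)
    (hs : s₀ ≤ τ)
    (hK₁ : ContinuousOn K₁ (Icc s₀ τ)) (hK₂ : ContinuousOn K₂ (Icc s₀ τ))
    (hU₁ : ∀ s ∈ Icc s₀ τ, HasDerivAt U₁ (-(U₁ s) ^ 2 - K₁ s) s)
    (hU₂ : ∀ s ∈ Icc s₀ τ, HasDerivAt U₂ (-(U₂ s) ^ 2 - K₂ s) s)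
    (hl : ContinuousOn l (Icc s₀ τ))
    (horder : ∀ s ∈ Icc s₀ τ, l s ≤ U₂ s ∧ U₂ s ≤ U₁ s)
    (heq : U₁ s₀ = U₂ s₀) :
    U₁ τ - U₂ τ ≤
      ∫ s in s₀..τ, Real.exp (-2 * ∫ a in s..τ, l a) * |K₁ s - K₂ s| := by
  have hW' : ∀ x ∈ Icc s₀ τ, HasDerivAt (fun t => U₁ t - U₂ t)
      ((-(U₁ x) ^ 2 - K₁ x) - (-(U₂ x) ^ 2 - K₂ x)) x :=
    fun x hx => (hU₁ x hx).sub (hU₂ x hx)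
  have hbound := le_exp_neg_integral_mul_add_integral_of_hasDerivAt_le hs
    (fun x hx => (hW' x hx).continuousAt.continuousWithinAt)
    (fun x hx => hW' x (Ioo_subset_Icc_self hx)) (continuousOn_const.mul hl)
    (hK₁.sub hK₂).abs.integrableOn_Icc
    (fun x hx => riccati_rhs_sub_le (horder x (Ioo_subset_Icc_self hx)).1
      (horder x (Ioo_subset_Icc_self hx)).2)
  simpa [heq, intervalIntegral.integral_const_mul] using hbound

theorem riccati_difference_estimate (K₁ K₂ U₁ U₂ l : ℝ → ℝ) (s₀ τ : ℝ)
    (hs : s₀ ≤ τ)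
    (hK₁ : ContinuousOn K₁ (Icc s₀ τ)) (hK₂ : ContinuousOn K₂ (Icc s₀ τ))
    (hU₁ : ∀ s ∈ Icc s₀ τ, HasDerivAt U₁ (-(U₁ s) ^ 2 - K₁ s) s)
    (hU₂ : ∀ s ∈ Icc s₀ τ, HasDerivAt U₂ (-(U₂ s) ^ 2 - K₂ s) s)
    (hl : ContinuousOn l (Icc s₀ τ))
    (hlnonneg : ∀ s ∈ Icc s₀ τ, 0 ≤ l s)
    (horder : ∀ s ∈ Icc s₀ τ, l s ≤ U₂ s ∧ U₂ s ≤ U₁ s)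
    (heq : U₁ s₀ = U₂ s₀) :
    U₁ τ - U₂ τ ≤
      ∫ s in s₀..τ, Real.exp (-2 * ∫ a in s..τ, l a) * |K₁ s - K₂ s| :=
  riccati_difference_estimate_general K₁ K₂ U₁ U₂ l s₀ τ hs hK₁ hK₂ hU₁ hU₂ hl horder heq
end
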